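/- Let G, H be Polish groups with compatible left-invariant metrics, and suppose H is NSS, witnessed by an open set containing no non-trivial subgroups. Let S : G → H be a continuous map with S(1_G) = 1_H such that for all sequences x, y ∈ G^ω, if the partial products (x(0)···x(n)·y(n)^{-1}···y(0)^{-1})_n converge in G then (S(x(0))···S(x(n))·S(y(n))^{-1}···S(y(0))^{-1})_n converge in H. Then the set X = {g ∈ G : S(g^{-1}) = S(g)^{-1}} contains 1_G and there exists r_0 > 0 such that for all g, g' ∈ G with d_G(g,g') < r_0, g ∈ X implies g' ∈ X; consequently the open subgroup generated by {g : d_G(1_G,g) < r_0} is contained in X. -/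

import Mathlib

/-! If `X = {g | S g⁻¹ = (S g)⁻¹}` were not uniformly open, there would be `v k ∈ X`, `u k ∉ X`
with `d(u k, v k) → 0`. Then `h k = S (u k)⁻¹ * S (u k) ≠ 1`, so by NSS some power `h k ^ n k`
leaves a fixed ball around `1`. Feed `S` the words `u⁻¹ u u⁻¹ u ⋯` and `v⁻¹ v v⁻¹ v ⋯` in which
each pair `u k`, `v k` is used `n k` times in a row: the products in `G` tend to `1`, while the
odd-indexed products in `H` are the products of the `h k`, which jump by `h k ^ n k` across each
block and so do not converge. -/

open Filter Topology

/-- The partial product `x(0) ⋯ x(n)`. -/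
def partialProd {G : Type*} [Monoid G] (x : ℕ → G) (n : ℕ) : G :=
  ((List.range (n + 1)).map x).prod

/-- The paper's `(E_*(G), E_*(H))`-homomorphism condition. -/
def PreservesConvergentProducts {G H : Type*} [Group G] [TopologicalSpace G] [Group H]
    [TopologicalSpace H] (S : G → H) : Prop :=
  ∀ x y : ℕ → G,
    (∃ l : G, Tendsto (fun n => partialProd x n * (partialProd y n)⁻¹) atTop (𝓝 l)) →
    ∃ l : H, Tendsto
      (fun n => partialProd (fun p => S (x p)) n * (partialProd (fun p => S (y p)) n)⁻¹)
      atTop (𝓝 l)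

section PartialProd

variable {M : Type*} [Monoid M]

lemma partialProd_succ (x : ℕ → M) (n : ℕ) :
    partialProd x (n + 1) = partialProd x n * x (n + 1) :=
  List.prod_range_succ x (n + 1)

lemma partialProd_const_one (n : ℕ) : partialProd (fun _ => (1 : M)) n = 1 := by
  simp [partialProd]

def interleave {α : Type*} (a b : ℕ → α) (j : ℕ) : α :=
  if Even j then a (j / 2) else b (j / 2)

lemma apply_interleave {α β : Type*} (f : α → β) (a b : ℕ → α) (j : ℕ) :
    f (interleave a b j) = interleave (fun i => f (a i)) (fun i => f (b i)) j :=
  apply_ite f _ _ _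

lemma interleave_two_mul {α : Type*} (a b : ℕ → α) (j : ℕ) : interleave a b (2 * j) = a j := by
  simp [interleave]

lemma interleave_two_mul_add_one {α : Type*} (a b : ℕ → α) (j : ℕ) :
    interleave a b (2 * j + 1) = b j := by
  simp [interleave, Nat.not_even_bit1, show (2 * j + 1) / 2 = j by omega]

lemma partialProd_interleave_two_mul_add_one (a b : ℕ → M) (j : ℕ) :
    partialProd (interleave a b) (2 * j + 1) = partialProd (fun i => a i * b i) j := by
  induction j with
  | zero =>
    simp [partialProd, List.range_succ, interleave]
  | succ j ih =>
    rw [show 2 * (j + 1) + 1 = 2 * j + 1 + 1 + 1 by ring, partialProd_succ, partialProd_succ, ih,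
      partialProd_succ, show 2 * j + 1 + 1 = 2 * (j + 1) by ring, interleave_two_mul,
      interleave_two_mul_add_one, mul_assoc]

end PartialProd

lemma partialProd_interleave_inv_self {G : Type*} [Group G] (w : ℕ → G) (m : ℕ) :
    partialProd (interleave (fun j => (w j)⁻¹) w) m = if Even m then (w (m / 2))⁻¹ else 1 := by
  induction m with
  | zero => simp [partialProd, interleave]
  | succ m ih =>
    rw [partialProd_succ, ih]
    rcases Nat.even_or_odd' m with ⟨k, rfl | rfl⟩
    · simp [interleave_two_mul_add_one, Nat.not_even_bit1]
    · rw [show 2 * k + 1 + 1 = 2 * (k + 1) by ring, interleave_two_mul]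
      simp [Nat.not_even_bit1]

section LeftInvariant

variable {G : Type*} [Group G] [PseudoMetricSpace G] [IsIsometricSMul G G]

lemma dist_inv_one (g : G) : dist g⁻¹ 1 = dist 1 g := by
  simpa using (dist_mul_left g g⁻¹ 1).symm

lemma dist_inv_mul_one (g h : G) : dist (g⁻¹ * h) 1 = dist h g := by
  simpa using (dist_mul_left g (g⁻¹ * h) 1).symm

lemma dist_self_mul (g h : G) : dist g (g * h) = dist 1 h := by
  simpa using dist_mul_left g 1 h

lemma closure_ball_one_subset {X : Set G} {r : ℝ} (h1 : (1 : G) ∈ X)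
    (hX : ∀ g g' : G, dist g g' < r → g ∈ X → g' ∈ X) :
    ((Subgroup.closure {g : G | dist 1 g < r} : Subgroup G) : Set G) ⊆ X := by
  intro g hg
  refine Subgroup.closure_induction_right (p := fun g _ => g ∈ X) h1 ?_ ?_ hg
  · intro a _ w hw ha
    exact hX a (a * w) ((dist_self_mul a w).trans_lt hw) ha
  · intro a _ w hw ha
    refine hX a (a * w⁻¹) ?_ ha
    rwa [dist_self_mul, dist_comm, dist_inv_one]

lemma exists_forall_ne_one_exists_le_dist_pow {V : Set G} (hV : V ∈ 𝓝 1)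
    (hnss : ∀ K : Subgroup G, (K : Set G) ⊆ V → K = ⊥) :
    ∃ ε > 0, ∀ h : G, h ≠ 1 → ∃ n : ℕ, ε ≤ dist 1 (h ^ n) := by
  obtain ⟨ε, hε, hball⟩ := Metric.mem_nhds_iff.1 hV
  refine ⟨ε, hε, fun h hh => ?_⟩
  by_contra! hpow
  refine hh (Subgroup.zpowers_eq_bot.1 (hnss _ ?_))
  rintro _ ⟨m, rfl⟩
  refine hball (Metric.mem_ball.2 ?_)
  rcases m with m | m
  · simpa [dist_comm] using hpow m
  · simpa [dist_inv_one] using hpow (m + 1)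

end LeftInvariant

def blockStart (n : ℕ → ℕ) (k : ℕ) : ℕ :=
  ∑ i ∈ Finset.range k, n i

lemma blockStart_succ (n : ℕ → ℕ) (k : ℕ) : blockStart n (k + 1) = blockStart n k + n k :=
  Finset.sum_range_succ n k

lemma strictMono_blockStart {n : ℕ → ℕ} (hn : ∀ k, 0 < n k) : StrictMono (blockStart n) :=
  strictMono_nat_of_lt_succ fun k => by
    rw [blockStart_succ]
    exact Nat.lt_add_of_pos_right (hn k)

lemma exists_tendsto_block_index {n : ℕ → ℕ} (hn : ∀ k, 0 < n k) :
    ∃ κ : ℕ → ℕ, Tendsto κ atTop atTop ∧ ∀ k t, t < n k → κ (blockStart n k + t) = k := by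
  classical
  have hmono := strictMono_blockStart hn
  have hex : ∀ j, ∃ k, j < blockStart n (k + 1) := fun j => ⟨j, hmono.id_le (j + 1)⟩
  refine ⟨fun j => Nat.find (hex j),
    tendsto_atTop_atTop.2 fun K => ⟨blockStart n K, fun j hj => ?_⟩,
    fun k t ht => (Nat.find_eq_iff _).2 ⟨?_, fun m hm => ?_⟩⟩
  · by_contra! hlt
    have := hmono.monotone (show Nat.find (hex j) + 1 ≤ K from hlt)
    have := Nat.find_spec (hex j)
    omega
  · have := blockStart_succ n k
    omega
  · have := hmono.monotone (show m + 1 ≤ k from hm)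
    omega

lemma not_cauchySeq_partialProd_of_blocks {H : Type*} [Group H] [PseudoMetricSpace H]
    [IsIsometricSMul H H] {h : ℕ → H} {n κ : ℕ → ℕ} {ε : ℝ} (hε : 0 < ε) (hn : ∀ k, 0 < n k)
    (hesc : ∀ k, ε ≤ dist 1 (h k ^ n k)) (hκ : ∀ k t, t < n k → κ (blockStart n k + t) = k) :
    ¬ CauchySeq (partialProd fun j => h (κ j)) := by
  set P : ℕ → H := fun j => ((List.range j).map fun i => h (κ i)).prod
  have hPsucc : ∀ j, P (j + 1) = P j * h (κ j) := fun j => List.prod_range_succ _ j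
  have hPblock : ∀ k t, t ≤ n k → P (blockStart n k + t) = P (blockStart n k) * h k ^ t := by
    intro k t ht
    induction t with
    | zero => simp
    | succ t ih =>
      rw [← add_assoc, hPsucc, ih (by omega), hκ k t (by omega), pow_succ, mul_assoc]
  have hjump : ∀ k, ε ≤ dist (P (blockStart n k)) (P (blockStart n (k + 1))) := by
    intro k
    rw [blockStart_succ, hPblock k (n k) le_rfl, dist_self_mul]
    exact hesc k
  have hmono := strictMono_blockStart hn
  change ¬ CauchySeq fun j => P (j + 1)
  rw [cauchySeq_shift, Metric.cauchySeq_iff]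
  push Not
  exact ⟨ε, hε, fun M => ⟨blockStart n M, hmono.id_le M, blockStart n (M + 1),
    (hmono.id_le (M + 1)).trans' (Nat.le_succ M), hjump M⟩⟩

section Hom

variable {G H : Type*} [Group G] [PseudoMetricSpace G] [IsIsometricSMul G G] [Group H]

namespace PreservesConvergentProducts

lemma exists_tendsto_partialProd_of_tendsto_dist [TopologicalSpace H] {S : G → H}
    (hS : PreservesConvergentProducts S) {u v : ℕ → G}
    (huv : Tendsto (fun j => dist (u j) (v j)) atTop (𝓝 0))
    (hv : ∀ j, S (v j)⁻¹ = (S (v j))⁻¹) :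
    ∃ l, Tendsto (partialProd fun j => S (u j)⁻¹ * S (u j)) atTop (𝓝 l) := by
  set x := interleave (fun j => (u j)⁻¹) u
  set y := interleave (fun j => (v j)⁻¹) v
  have hG : Tendsto (fun m => partialProd x m * (partialProd y m)⁻¹) atTop (𝓝 1) := by
    rw [tendsto_iff_dist_tendsto_zero]
    refine squeeze_zero (fun _ => dist_nonneg) (fun m => ?_)
      (huv.comp (Nat.tendsto_div_const_atTop two_ne_zero))
    simp only [x, y, partialProd_interleave_inv_self]
    split_ifs
    · rw [inv_inv, dist_inv_mul_one, dist_comm]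
      rfl
    · simp
  obtain ⟨l, hl⟩ := hS x y ⟨1, hG⟩
  have hodd : Tendsto (fun j : ℕ => 2 * j + 1) atTop atTop :=
    tendsto_atTop_mono (fun j => show j ≤ 2 * j + 1 by omega) tendsto_id
  refine ⟨l, (hl.comp hodd).congr fun j => ?_⟩
  simp only [Function.comp, x, y, apply_interleave S, partialProd_interleave_two_mul_add_one, hv,
    inv_mul_cancel, partialProd_const_one, inv_one, mul_one]

lemma exists_pos_map_inv_eq_inv_of_dist_lt [PseudoMetricSpace H] [IsIsometricSMul H H] {S : G → H}
    (hS : PreservesConvergentProducts S) {V : Set H} (hV : V ∈ 𝓝 1)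
    (hnss : ∀ K : Subgroup H, (K : Set H) ⊆ V → K = ⊥) :
    ∃ r₀ : ℝ, 0 < r₀ ∧ ∀ g g' : G, dist g g' < r₀ → S g⁻¹ = (S g)⁻¹ → S g'⁻¹ = (S g')⁻¹ := by
  by_contra! hcon
  obtain ⟨ε, hε, hesc⟩ := exists_forall_ne_one_exists_le_dist_pow hV hnss
  choose v u hvu hv hu using fun k : ℕ => hcon (1 / (k + 1)) Nat.one_div_pos_of_nat
  choose n hn using fun k => hesc _ (mt mul_eq_one_iff_eq_inv.1 (hu k))
  have hn_pos : ∀ k, 0 < n k := fun k => Nat.pos_of_ne_zero fun h0 => by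
    have := hn k
    rw [h0, pow_zero, dist_self] at this
    linarith
  obtain ⟨κ, hκ, hblock⟩ := exists_tendsto_block_index hn_pos
  have hdist : Tendsto (fun k => dist (u k) (v k)) atTop (𝓝 0) :=
    squeeze_zero (fun _ => dist_nonneg) (fun k => (dist_comm (u k) (v k)).trans_le (hvu k).le)
      tendsto_one_div_add_atTop_nhds_zero_nat
  obtain ⟨l, hl⟩ :=
    hS.exists_tendsto_partialProd_of_tendsto_dist (hdist.comp hκ) fun j => hv (κ j)
  exact not_cauchySeq_partialProd_of_blocks hε hn_pos hn hblock hl.cauchySeq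

end PreservesConvergentProducts

end Hom

theorem stmt_19_general (G H : Type*)
    [Group G] [MetricSpace G]
    [Group H] [MetricSpace H]
    (hGleft : ∀ g h k : G, dist (g * h) (g * k) = dist h k)
    (hHleft : ∀ g h k : H, dist (g * h) (g * k) = dist h k)
    (V : Set H) (hVopen : IsOpen V) (hV1 : (1 : H) ∈ V)
    (hVnss : ∀ K : Subgroup H, (K : Set H) ⊆ V → K = ⊥)
    (S : G → H) (hS1 : S 1 = 1)
    (hhom : ∀ x y : ℕ → G,
      (∃ l : G, Tendsto (fun n => partialProd x n * (partialProd y n)⁻¹) atTop (𝓝 l)) →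
      (∃ l : H, Tendsto
        (fun n => partialProd (fun p => S (x p)) n * (partialProd (fun p => S (y p)) n)⁻¹)
        atTop (𝓝 l))) :
    (1 : G) ∈ {g : G | S g⁻¹ = (S g)⁻¹} ∧
    ∃ r₀ : ℝ, 0 < r₀ ∧
      (∀ g g' : G, dist g g' < r₀ → S g⁻¹ = (S g)⁻¹ → S g'⁻¹ = (S g')⁻¹) ∧
      ((Subgroup.closure {g : G | dist (1 : G) g < r₀} : Subgroup G) : Set G) ⊆
        {g : G | S g⁻¹ = (S g)⁻¹} := by
  have : IsIsometricSMul G G := ⟨fun g => Isometry.of_dist_eq (hGleft g)⟩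
  have : IsIsometricSMul H H := ⟨fun g => Isometry.of_dist_eq (hHleft g)⟩
  have h1X : S (1 : G)⁻¹ = (S 1)⁻¹ := by rw [inv_one, hS1, inv_one]
  have hS : PreservesConvergentProducts S := hhom
  obtain ⟨r₀, hr₀, hX⟩ := hS.exists_pos_map_inv_eq_inv_of_dist_lt (hVopen.mem_nhds hV1) hVnss
  exact ⟨h1X, r₀, hr₀, hX, closure_ball_one_subset h1X hX⟩

/-- Let `G, H` be Polish groups with compatible left-invariant metrics, `H` NSS witnessed
by an open set `V` containing no non-trivial subgroup, and `S : G → H` a continuous map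
with `S 1 = 1` such that convergence of `(x(0)⋯x(n)·y(n)⁻¹⋯y(0)⁻¹)` implies convergence
of `(S(x(0))⋯S(x(n))·S(y(n))⁻¹⋯S(y(0))⁻¹)`. Then the set
`X = {g : S g⁻¹ = (S g)⁻¹}` contains `1` and there is `r₀ > 0` such that `X` is invariant
under `d_G`-perturbations smaller than `r₀`; consequently the subgroup generated by the
ball `{g : d(1,g) < r₀}` is contained in `X`. -/
theorem stmt_19 (G H : Type*)
    [Group G] [MetricSpace G] [IsTopologicalGroup G] [PolishSpace G]
    [Group H] [MetricSpace H] [IsTopologicalGroup H] [PolishSpace H]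
    (hGleft : ∀ g h k : G, dist (g * h) (g * k) = dist h k)
    (hHleft : ∀ g h k : H, dist (g * h) (g * k) = dist h k)
    (V : Set H) (hVopen : IsOpen V) (hV1 : (1 : H) ∈ V)
    (hVnss : ∀ K : Subgroup H, (K : Set H) ⊆ V → K = ⊥)
    (S : G → H) (hS : Continuous S) (hS1 : S 1 = 1)
    (hhom : ∀ x y : ℕ → G,
      (∃ l : G, Tendsto (fun n => partialProd x n * (partialProd y n)⁻¹) atTop (𝓝 l)) →
      (∃ l : H, Tendsto
        (fun n => partialProd (fun p => S (x p)) n * (partialProd (fun p => S (y p)) n)⁻¹)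
        atTop (𝓝 l))) :
    (1 : G) ∈ {g : G | S g⁻¹ = (S g)⁻¹} ∧
    ∃ r₀ : ℝ, 0 < r₀ ∧
      (∀ g g' : G, dist g g' < r₀ → S g⁻¹ = (S g)⁻¹ → S g'⁻¹ = (S g')⁻¹) ∧
      ((Subgroup.closure {g : G | dist (1 : G) g < r₀} : Subgroup G) : Set G) ⊆
        {g : G | S g⁻¹ = (S g)⁻¹} :=
  stmt_19_general G H hGleft hHleft V hVopen hV1 hVnss S hS1 hhom
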